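/- Let ⟨K,B,P,N⟩_R be a DPI and D a set of minimal diagnoses w.r.t. it. For every seed S with ∅ ⊂ S ⊂ D such that Q_can(S) is defined (i.e., (K \ U_S) ∩ Disc_D ≠ ∅), the canonical query Q_can(S) is a query w.r.t. D, i.e., dx(Q_can(S)) ≠ ∅ and dnx(Q_can(S)) ≠ ∅. -/

import Mathlib

namespace KBDDiag

/-- A diagnosis problem instance (DPI) `⟨K,B,P,N⟩_R` over a Tarskian logic on sentences `L`. -/
structure DPI (L : Type*) where
  /-- the entailment relation of the logic -/
  entails : Set L → L → Prop
  /-- entailment is monotonic -/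
  entails_mono : ∀ (X Y : Set L) (α : L), entails X α → entails (X ∪ Y) α
  /-- entailment is idempotent -/
  entails_idem : ∀ (X A : Set L) (β : L),
    (∀ α ∈ A, entails X α) → entails (X ∪ A) β → entails X β
  /-- entailment is extensive -/
  entails_ext : ∀ (X : Set L) (α : L), α ∈ X → entails X α
  /-- the (possibly faulty) KB -/
  K : Set L
  /-- the background KB -/
  B : Set L
  /-- the positive test cases -/
  P : Set (Set L)
  /-- the negative test cases -/
  N : Set (Set L)
  /-- requirements: `r X` means the KB `X` satisfies requirement `r` -/
  R : Set (Set L → Prop)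
  K_finite : K.Finite
  B_finite : B.Finite
  K_B_disjoint : K ∩ B = ∅
  P_finite : P.Finite
  P_mem_finite : ∀ p ∈ P, Set.Finite p
  N_finite : N.Finite
  N_mem_finite : ∀ n ∈ N, Set.Finite n
  /-- violation of a requirement is monotone -/
  viol_mono : ∀ r ∈ R, ∀ X Y : Set L, X ⊆ Y → ¬ r X → ¬ r Y
  /-- requirements are preserved under adding entailed sentences -/
  sat_entailed : ∀ r ∈ R, ∀ X A : Set L, r X → (∀ α ∈ A, entails X α) → r (X ∪ A)
  /-- the background KB satisfies every requirement -/
  B_sat : ∀ r ∈ R, r B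

namespace DPI

variable {L : Type*} (d : DPI L)

/-- `X ⊨ Y` : X entails every sentence of Y. -/
def EntailsAll (X Y : Set L) : Prop := ∀ α ∈ Y, d.entails X α

/-- `U_P`, the union of all positive test cases. -/
def UP : Set L := ⋃₀ d.P

/-- `Ks` is a solution KB w.r.t. the DPI. -/
def IsSolutionKB (Ks : Set L) : Prop :=
  (∀ r ∈ d.R, r (Ks ∪ d.B)) ∧
  (∀ p ∈ d.P, d.EntailsAll (Ks ∪ d.B) p) ∧
  (∀ n ∈ d.N, ¬ d.EntailsAll (Ks ∪ d.B) n)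

/-- `D` is a diagnosis w.r.t. the DPI. -/
def IsDiagnosis (D : Set L) : Prop :=
  D ⊆ d.K ∧ d.IsSolutionKB ((d.K \ D) ∪ d.UP)

/-- `D` is a minimal diagnosis w.r.t. the DPI. -/
def IsMinDiagnosis (D : Set L) : Prop :=
  d.IsDiagnosis D ∧ ∀ D' ⊂ D, ¬ d.IsDiagnosis D'

/-- `C` is a conflict w.r.t. the DPI. -/
def IsConflict (C : Set L) : Prop :=
  C ⊆ d.K ∧ ¬ d.IsSolutionKB (C ∪ d.UP)

/-- `C` is a minimal conflict w.r.t. the DPI. -/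
def IsMinConflict (C : Set L) : Prop :=
  d.IsConflict C ∧ ∀ C' ⊂ C, ¬ d.IsConflict C'

/-- `Ks` is a maximal solution KB w.r.t. the DPI. -/
def IsMaxSolutionKB (Ks : Set L) : Prop :=
  d.IsSolutionKB Ks ∧ ¬ ∃ K' : Set L, d.IsSolutionKB K' ∧ Ks ∩ d.K ⊂ K' ∩ d.K

/-- `K*_i = (K \ D_i) ∪ B ∪ U_P`. -/
def Kstar (Di : Set L) : Set L := (d.K \ Di) ∪ d.B ∪ d.UP

/-- `X` violates some requirement in `R` or entails some negative test case. -/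
def Violates (X : Set L) : Prop :=
  (∃ r ∈ d.R, ¬ r X) ∨ (∃ n ∈ d.N, d.EntailsAll X n)

/-- `dx(X)` w.r.t. the leading diagnoses `Ds`. -/
def dxS (Ds : Set (Set L)) (X : Set L) : Set (Set L) :=
  {Di ∈ Ds | d.EntailsAll (d.Kstar Di) X}

/-- `dnx(X)` w.r.t. the leading diagnoses `Ds`. -/
def dnxS (Ds : Set (Set L)) (X : Set L) : Set (Set L) :=
  {Di ∈ Ds | d.Violates (d.Kstar Di ∪ X)}

/-- `dz(X)` w.r.t. the leading diagnoses `Ds`. -/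
def dzS (Ds : Set (Set L)) (X : Set L) : Set (Set L) :=
  Ds \ (d.dxS Ds X ∪ d.dnxS Ds X)

/-- `Q` is a query w.r.t. the leading diagnoses `Ds`. -/
def IsQuery (Ds : Set (Set L)) (Q : Set L) : Prop :=
  Q.Nonempty ∧ (d.dxS Ds Q).Nonempty ∧ (d.dnxS Ds Q).Nonempty

/-- The canonical query `Q_can(S) = (K \ U_S) ∩ (U_D \ I_D)` w.r.t. the seed `S`. -/
def Qcan (Ds S : Set (Set L)) : Set L := (d.K \ ⋃₀ S) ∩ (⋃₀ Ds \ ⋂₀ Ds)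

/-- `⟨dxp, dnxp, ∅⟩` is a canonical q-partition of `Ds`. -/
def IsCanonicalQPartition (Ds dxp dnxp : Set (Set L)) : Prop :=
  dxp ∪ dnxp = Ds ∧ dxp ∩ dnxp = ∅ ∧
  dxp.Nonempty ∧ dxp ⊂ Ds ∧
  (d.Qcan Ds dxp).Nonempty ∧
  d.dxS Ds (d.Qcan Ds dxp) = dxp ∧
  d.dnxS Ds (d.Qcan Ds dxp) = dnxp ∧
  d.dzS Ds (d.Qcan Ds dxp) = ∅

end DPI

/-- `Disc_D = U_D \ I_D`, the discrimination sentences w.r.t. `Ds`. -/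
def Disc {L : Type*} (Ds : Set (Set L)) : Set L := ⋃₀ Ds \ ⋂₀ Ds

/-- `H` is a hitting set of the collection `S`. -/
def IsHittingSet {α : Type*} (S : Set (Set α)) (H : Set α) : Prop :=
  H ⊆ ⋃₀ S ∧ ∀ s ∈ S, (H ∩ s).Nonempty

/-- `H` is a minimal hitting set of the collection `S`. -/
def IsMinHittingSet {α : Type*} (S : Set (Set α)) (H : Set α) : Prop :=
  IsHittingSet S H ∧ ∀ H' ⊂ H, ¬ IsHittingSet S H'

/-- `MHS S`, the set of all minimal hitting sets of `S`. -/
def MHS {α : Type*} (S : Set (Set α)) : Set (Set α) :=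
  {H | IsMinHittingSet S H}

/-!
Every diagnosis `Dᵢ` of the seed `S` is disjoint from `Q := Q_can(S) ⊆ K \ U_S`, so `Q ⊆ K*ᵢ`
and `Dᵢ ∈ dx(Q)` by extensivity. Conversely, a sentence `α ∈ Q ⊆ U_D` lies in some leading
diagnosis `Dⱼ`. By minimality `Dⱼ \ {α}` is not a diagnosis, although `K*ⱼ ∪ {α}` still entails
every positive test case; so `K*ⱼ ∪ {α}` violates a requirement or entails a negative test case,
and by monotonicity so does `K*ⱼ ∪ Q`, i.e. `Dⱼ ∈ dnx(Q)`.
-/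

namespace DPI

variable {L : Type*} (d : DPI L)

theorem entails_of_subset {X Y : Set L} (h : X ⊆ Y) {β : L} (hX : d.entails X β) :
    d.entails Y β := by
  simpa only [Set.union_eq_self_of_subset_left h] using d.entails_mono X Y β hX

theorem entailsAll_of_subset {X Y : Set L} (h : Y ⊆ X) : d.EntailsAll X Y :=
  fun α hα => d.entails_ext X α (h hα)

variable {d}

theorem EntailsAll.mono {X Y Z : Set L} (h : X ⊆ Y) (hX : d.EntailsAll X Z) :
    d.EntailsAll Y Z :=
  fun β hβ => d.entails_of_subset h (hX β hβ)

theorem Violates.mono {X Y : Set L} (h : X ⊆ Y) (hX : d.Violates X) : d.Violates Y := by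
  rcases hX with ⟨r, hr, hrX⟩ | ⟨n, hn, hnX⟩
  · exact Or.inl ⟨r, hr, d.viol_mono r hr X Y h hrX⟩
  · exact Or.inr ⟨n, hn, hnX.mono h⟩

theorem violates_of_not_isSolutionKB {Ks : Set L}
    (hP : ∀ p ∈ d.P, d.EntailsAll (Ks ∪ d.B) p) (hKs : ¬ d.IsSolutionKB Ks) :
    d.Violates (Ks ∪ d.B) := by
  by_contra hv
  simp only [Violates, not_or, not_exists, not_and, not_not] at hv
  exact hKs ⟨hv.1, hP, hv.2⟩

theorem entailsAll_Kstar_of_subset {Di Q : Set L} (hQ : Q ⊆ d.K \ Di) :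
    d.EntailsAll (d.Kstar Di) Q :=
  d.entailsAll_of_subset (hQ.trans (Set.subset_union_left.trans Set.subset_union_left))

theorem IsMinDiagnosis.violates_Kstar_union_singleton {Dj : Set L} (hDj : d.IsMinDiagnosis Dj)
    {α : L} (hα : α ∈ Dj) : d.Violates (d.Kstar Dj ∪ {α}) := by
  have hsmaller : Dj \ {α} ⊂ Dj := Set.sdiff_singleton_ssubset.mpr hα
  have hnotSol : ¬ d.IsSolutionKB (d.K \ (Dj \ {α}) ∪ d.UP) := fun hsol =>
    hDj.2 _ hsmaller ⟨Set.sdiff_subset.trans hDj.1.1, hsol⟩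
  have hgrow : (d.K \ Dj ∪ d.UP) ∪ d.B ⊆ (d.K \ (Dj \ {α}) ∪ d.UP) ∪ d.B := by
    gcongr
  have hshrink : (d.K \ (Dj \ {α}) ∪ d.UP) ∪ d.B ⊆ d.Kstar Dj ∪ {α} := by
    intro x hx
    simp only [Kstar, Set.mem_union, Set.mem_sdiff, Set.mem_singleton_iff] at hx ⊢
    tauto
  have hP : ∀ p ∈ d.P, d.EntailsAll ((d.K \ (Dj \ {α}) ∪ d.UP) ∪ d.B) p := fun p hp =>
    (hDj.1.2.2.1 p hp).mono hgrow
  exact (violates_of_not_isSolutionKB hP hnotSol).mono hshrink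

theorem Qcan_subset_sdiff {Ds S : Set (Set L)} {Di : Set L} (hDi : Di ∈ S) :
    d.Qcan Ds S ⊆ d.K \ Di :=
  fun _ hα => ⟨hα.1.1, fun hαDi => hα.1.2 ⟨Di, hDi, hαDi⟩⟩

theorem mem_dnxS_of_mem {Ds : Set (Set L)} {Dj Q : Set L} (hDjDs : Dj ∈ Ds)
    (hDj : d.IsMinDiagnosis Dj) {α : L} (hαQ : α ∈ Q) (hαDj : α ∈ Dj) : Dj ∈ d.dnxS Ds Q :=
  ⟨hDjDs, (hDj.violates_Kstar_union_singleton hαDj).mono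
    (Set.union_subset_union_right _ (Set.singleton_subset_iff.mpr hαQ))⟩

end DPI

/-- Any defined canonical query `Q_can(S)` for a seed `∅ ⊂ S ⊂ Ds`
is a query w.r.t. `Ds`. -/
theorem statement10 {L : Type*} (d : DPI L) (Ds : Set (Set L))
    (hDs : ∀ Di ∈ Ds, d.IsMinDiagnosis Di)
    (S : Set (Set L)) (hS1 : S.Nonempty) (hS2 : S ⊂ Ds)
    (hdef : (d.Qcan Ds S).Nonempty) :
    d.IsQuery Ds (d.Qcan Ds S) := by
  refine ⟨hdef, ?_, ?_⟩
  · obtain ⟨Di, hDi⟩ := hS1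
    exact ⟨Di, hS2.subset hDi, d.entailsAll_Kstar_of_subset (d.Qcan_subset_sdiff hDi)⟩
  · obtain ⟨α, hαQ⟩ := hdef
    obtain ⟨Dj, hDjDs, hαDj⟩ := hαQ.2.1
    exact ⟨Dj, DPI.mem_dnxS_of_mem hDjDs (hDs Dj hDjDs) hαQ hαDj⟩

end KBDDiag
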